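/- arXiv:1012.5220 — 2 statements merged into one kernel-verified Lean document; each statement's English description precedes it below -/
import Mathlib

section
/- Let λ > 1/2 and ε ∈ (0, π/2). Then there exist constants 0 < c ≤ c' such that for all sufficiently large r, c·e^{-(2λ+1)r} ≤ e^{-2λ r}·∫_0^{ε} ( e^{2r} + 2 + cos(θ)(2 − e^{2r}) )^{-λ} dθ ≤ c'·e^{-(2λ+1)r}. For λ = 1/2 the same integral is of order r·e^{-2r}. -/
open Real intervalIntegral

namespace LPIA


lemma cos_lb {θ : ℝ} : 1 - Real.cos θ ≤ θ ^ 2 / 2 := by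
  nlinarith [Real.one_sub_sq_div_two_le_cos (x := θ)]

lemma cos_ub {θ : ℝ} (h0 : 0 ≤ θ) (h1 : θ ≤ π / 2) :
    2 / π ^ 2 * θ ^ 2 ≤ 1 - Real.cos θ := by
  have hπ := Real.pi_pos
  have := Real.cos_le_one_sub_mul_cos_sq (x := θ) (by rw [abs_of_nonneg h0]; linarith)
  linarith

lemma base_pos {A : ℝ} (hA : 0 ≤ A) (θ : ℝ) : 0 < 4 + A * (1 - Real.cos θ) := by
  nlinarith [Real.cos_le_one θ]

lemma cont_f (A lam : ℝ) (hA : 0 ≤ A) :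
    Continuous fun θ : ℝ => (4 + A * (1 - Real.cos θ)) ^ (-lam) := by
  apply Continuous.rpow_const (by continuity)
  exact fun x => Or.inl (base_pos hA x).ne'

lemma intble (A lam a b : ℝ) (hA : 0 ≤ A) :
    IntervalIntegrable (fun θ : ℝ => (4 + A * (1 - Real.cos θ)) ^ (-lam)) MeasureTheory.volume a b :=
  (cont_f A lam hA).intervalIntegrable a b

lemma intble_comp (B lam a b : ℝ) (hB : 0 < B) (ha : 0 < a) (hab : a ≤ b) :
    IntervalIntegrable (fun θ : ℝ => (B * θ ^ 2) ^ (-lam)) MeasureTheory.volume a b := by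
  apply ContinuousOn.intervalIntegrable
  apply ContinuousOn.rpow_const (by fun_prop)
  intro x hx
  rw [Set.uIcc_of_le hab] at hx
  left
  have hx0 : 0 < x := lt_of_lt_of_le ha hx.1
  positivity

lemma sq_rpow {θ : ℝ} (hθ : 0 ≤ θ) (y : ℝ) : (θ ^ 2 : ℝ) ^ (y : ℝ) = θ ^ (2 * y) := by
  rw [← Real.rpow_natCast θ 2, ← Real.rpow_mul hθ]
  norm_num

lemma upper_split (lam ε A δ : ℝ) (hlam : 0 ≤ lam) (hε : ε ≤ π / 2)
    (hδ0 : 0 < δ) (hδε : δ ≤ ε) (hA : 0 < A) :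
    ∫ θ in (0:ℝ)..ε, (4 + A * (1 - Real.cos θ)) ^ (-lam)
      ≤ δ + ∫ θ in δ..ε, (2 * A / π ^ 2 * θ ^ 2) ^ (-lam) := by
  have hπ := Real.pi_pos
  have hB : 0 < 2 * A / π ^ 2 := by positivity
  rw [← integral_add_adjacent_intervals (b := δ) (intble A lam 0 δ hA.le) (intble A lam δ ε hA.le)]
  have h1 : ∫ θ in (0:ℝ)..δ, (4 + A * (1 - Real.cos θ)) ^ (-lam) ≤ δ := by
    calc ∫ θ in (0:ℝ)..δ, (4 + A * (1 - Real.cos θ)) ^ (-lam)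
        ≤ ∫ _ in (0:ℝ)..δ, (1:ℝ) := by
          apply integral_mono_on hδ0.le (intble A lam 0 δ hA.le)
            (intervalIntegrable_const)
          intro x _
          exact Real.rpow_le_one_of_one_le_of_nonpos
            (by nlinarith [Real.cos_le_one x]) (by linarith)
      _ = δ := by simp
  have h2 : ∫ θ in δ..ε, (4 + A * (1 - Real.cos θ)) ^ (-lam)
      ≤ ∫ θ in δ..ε, (2 * A / π ^ 2 * θ ^ 2) ^ (-lam) := by
    apply integral_mono_on hδε (intble A lam δ ε hA.le)
      (intble_comp _ lam δ ε hB hδ0 hδε)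
    intro x hx
    have hx0 : 0 < x := lt_of_lt_of_le hδ0 hx.1
    apply Real.rpow_le_rpow_of_nonpos (by positivity) _ (by linarith)
    have h3 := mul_le_mul_of_nonneg_left (cos_ub hx0.le (hx.2.trans hε)) hA.le
    have h4 : 2 * A / π ^ 2 * x ^ 2 = A * (2 / π ^ 2 * x ^ 2) := by ring
    linarith
  linarith

lemma lower_split (lam ε A δ : ℝ) (hlam : 0 ≤ lam) (hδ0 : 0 ≤ δ) (hδε : δ ≤ ε)
    (hA : 0 ≤ A) (h5 : A * δ ^ 2 ≤ 2) :
    (5:ℝ) ^ (-lam) * δ ≤ ∫ θ in (0:ℝ)..ε, (4 + A * (1 - Real.cos θ)) ^ (-lam) := by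
  rw [← integral_add_adjacent_intervals (b := δ) (intble A lam 0 δ hA) (intble A lam δ ε hA)]
  have h1 : (5:ℝ) ^ (-lam) * δ ≤ ∫ θ in (0:ℝ)..δ, (4 + A * (1 - Real.cos θ)) ^ (-lam) := by
    calc (5:ℝ) ^ (-lam) * δ = ∫ _ in (0:ℝ)..δ, (5:ℝ) ^ (-lam) := by simp [mul_comm]
      _ ≤ _ := by
          apply integral_mono_on hδ0 intervalIntegrable_const (intble A lam 0 δ hA)
          intro x hx
          apply Real.rpow_le_rpow_of_nonpos (base_pos hA x) _ (by linarith)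
          have h := cos_lb (θ := x)
          have hxd : x ^ 2 ≤ δ ^ 2 := by nlinarith [hx.1, hx.2]
          nlinarith
  have h2 : 0 ≤ ∫ θ in δ..ε, (4 + A * (1 - Real.cos θ)) ^ (-lam) :=
    integral_nonneg hδε fun x _ => Real.rpow_nonneg (base_pos hA x).le _
  linarith

lemma lower_split_log (ε A δ : ℝ) (hδ0 : 0 < δ) (hδε : δ ≤ ε)
    (hA : 0 < A) (h8 : 8 ≤ A * δ ^ 2) :
    A ^ (-(1/2):ℝ) * (Real.log ε - Real.log δ)
      ≤ ∫ θ in (0:ℝ)..ε, (4 + A * (1 - Real.cos θ)) ^ (-(1/2):ℝ) := by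
  have hε0 : 0 < ε := hδ0.trans_le hδε
  rw [← integral_add_adjacent_intervals (b := δ) (intble A (1/2) 0 δ hA.le)
    (intble A (1/2) δ ε hA.le)]
  have h1 : 0 ≤ ∫ θ in (0:ℝ)..δ, (4 + A * (1 - Real.cos θ)) ^ (-(1/2):ℝ) :=
    integral_nonneg hδ0.le fun x _ => Real.rpow_nonneg (base_pos hA.le x).le _
  have h2 : A ^ (-(1/2):ℝ) * (Real.log ε - Real.log δ)
      ≤ ∫ θ in δ..ε, (4 + A * (1 - Real.cos θ)) ^ (-(1/2):ℝ) := by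
    have heval : ∫ θ in δ..ε, A ^ (-(1/2):ℝ) * θ⁻¹
        = A ^ (-(1/2):ℝ) * (Real.log ε - Real.log δ) := by
      rw [integral_const_mul, integral_inv_of_pos hδ0 hε0,
        Real.log_div hε0.ne' hδ0.ne']
    rw [← heval]
    apply integral_mono_on hδε _ (intble A (1/2) δ ε hA.le)
    · intro x hx
      have hx0 : 0 < x := lt_of_lt_of_le hδ0 hx.1
      have key : (A * x ^ 2) ^ (-(1/2):ℝ) = A ^ (-(1/2):ℝ) * x⁻¹ := by
        rw [Real.mul_rpow hA.le (sq_nonneg x), sq_rpow hx0.le]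
        norm_num [Real.rpow_neg_one]
      rw [← key]
      apply Real.rpow_le_rpow_of_nonpos (base_pos hA.le x) _ (by norm_num)
      have h := cos_lb (θ := x)
      have hxd : δ ^ 2 ≤ x ^ 2 := by nlinarith [hx.1]
      nlinarith
    · apply ContinuousOn.intervalIntegrable
      apply ContinuousOn.mul continuousOn_const
      apply ContinuousOn.inv₀ (by fun_prop)
      intro x hx
      rw [Set.uIcc_of_le hδε] at hx
      exact (lt_of_lt_of_le hδ0 hx.1).ne'
  linarith

lemma eval_upper_gt (lam B δ ε : ℝ) (hlam : 1/2 < lam) (hB : 0 < B)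
    (hδ : 0 < δ) (hδε : δ ≤ ε) :
    ∫ θ in δ..ε, (B * θ ^ 2) ^ (-lam) ≤ B ^ (-lam) * δ ^ (1 - 2*lam) / (2*lam - 1) := by
  have hε0 : 0 < ε := hδ.trans_le hδε
  have hcong : ∫ θ in δ..ε, (B * θ ^ 2) ^ (-lam)
      = B ^ (-lam) * ∫ θ in δ..ε, θ ^ (2 * (-lam)) := by
    rw [← integral_const_mul]
    apply integral_congr
    intro x hx
    rw [Set.uIcc_of_le hδε] at hx
    have hx0 : 0 < x := lt_of_lt_of_le hδ hx.1
    show (B * x ^ 2) ^ (-lam) = B ^ (-lam) * x ^ (2 * -lam)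
    rw [Real.mul_rpow hB.le (sq_nonneg x), sq_rpow hx0.le]
  rw [hcong]
  have hne : 2 * (-lam) ≠ -1 := by intro h; nlinarith [h]
  have h0 : (0:ℝ) ∉ Set.uIcc δ ε := by
    rw [Set.uIcc_of_le hδε]
    intro h
    exact absurd h.1 (by linarith)
  rw [integral_rpow (Or.inr ⟨hne, h0⟩)]
  have hp : 2 * (-lam) + 1 = -(2*lam - 1) := by ring
  have hpos : 0 < 2*lam - 1 := by linarith
  have hεp : 0 ≤ ε ^ (2 * (-lam) + 1) := Real.rpow_nonneg hε0.le _
  have hδp : δ ^ (2 * (-lam) + 1) = δ ^ (1 - 2*lam) := by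
    congr 1
    ring
  have hδp2 : δ ^ (-(2 * lam - 1) : ℝ) = δ ^ (1 - 2*lam) := by congr 1; ring
  rw [hp, div_neg, ← neg_div, neg_sub, hδp2, mul_div_assoc]
  have := sub_le_self (δ ^ (1 - 2*lam)) (Real.rpow_nonneg hε0.le (-(2 * lam - 1)))
  gcongr



lemma rpow_neg_two {x : ℝ} (hx : 0 < x) : x ^ (-2:ℝ) = (x^2)⁻¹ := by
  rw [show (-2:ℝ) = ((-2:ℤ):ℝ) by norm_num, Real.rpow_intCast]
  rw [zpow_neg]
  norm_cast

lemma neg_half_rpow {x : ℝ} (hx : 0 < x) : (x ^ (-2:ℝ)) ^ (-(1/2):ℝ) = x := by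
  rw [← Real.rpow_mul hx.le]
  norm_num

lemma rpow_neg_half_sq {x : ℝ} (hx : 0 ≤ x) : (x ^ (-(1/2):ℝ))^2 = x⁻¹ := by
  rw [← Real.rpow_natCast (x ^ (-(1/2):ℝ)) 2, ← Real.rpow_mul hx]
  norm_num [Real.rpow_neg_one]

lemma exp_div_rpow (r k : ℝ) (hk : 0 < k) :
    (Real.exp (2*r) / k^2) ^ (-(1/2):ℝ) = k * Real.exp (-r) := by
  have hx : 0 < k * Real.exp (-r) := by positivity
  have h2 : (Real.exp (-r))^2 = Real.exp (-2*r) := by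
    rw [sq, ← Real.exp_add]; ring_nf
  have h1 : Real.exp (2*r) / k^2 = (k * Real.exp (-r)) ^ (-2:ℝ) := by
    rw [rpow_neg_two hx, mul_pow, h2, show (-2:ℝ)*r = -(2*r) by ring, Real.exp_neg]
    field_simp
  rw [h1, neg_half_rpow hx]

lemma exp_rpow_neg_half (r : ℝ) : (Real.exp (2*r)) ^ (-(1/2):ℝ) = Real.exp (-r) := by
  have := exp_div_rpow r 1 one_pos
  simpa using this

lemma rpow_inv_sq_neg_half {ε : ℝ} (hε : 0 < ε) : ((ε^2)⁻¹) ^ (-(1/2):ℝ) = ε := by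
  rw [← rpow_neg_two hε, neg_half_rpow hε]


lemma eval_upper_eq (B δ ε : ℝ) (hB : 0 < B) (hδ : 0 < δ) (hδε : δ ≤ ε) :
    ∫ θ in δ..ε, (B * θ ^ 2) ^ (-(1/2:ℝ)) = B ^ (-(1/2):ℝ) * (Real.log ε - Real.log δ) := by
  have hε0 : 0 < ε := hδ.trans_le hδε
  have hcong : ∫ θ in δ..ε, (B * θ ^ 2) ^ (-(1/2:ℝ)) = ∫ θ in δ..ε, B ^ (-(1/2):ℝ) * θ⁻¹ := by
    apply integral_congr
    intro x hx
    rw [Set.uIcc_of_le hδε] at hx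
    have hx0 : 0 < x := lt_of_lt_of_le hδ hx.1
    show (B * x ^ 2) ^ (-(1/2:ℝ)) = B ^ (-(1/2):ℝ) * x⁻¹
    rw [Real.mul_rpow hB.le (sq_nonneg x), sq_rpow hx0.le]
    norm_num [Real.rpow_neg_one]
  rw [hcong, integral_const_mul, integral_inv_of_pos hδ hε0, Real.log_div hε0.ne' hδ.ne']

section PerR

variable {lam ε r : ℝ}

lemma setupE (hr1 : 1 ≤ r) : 4 ≤ Real.exp (2*r) := by
  have h := Real.add_one_le_exp r
  have h2 : Real.exp (2*r) = Real.exp r * Real.exp r := by rw [two_mul, Real.exp_add]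
  nlinarith [Real.exp_pos r]

lemma integral_swap (lam ε r : ℝ) :
    (∫ θ in (0:ℝ)..ε, (Real.exp (2*r) + 2 + Real.cos θ * (2 - Real.exp (2*r))) ^ (-lam))
      = ∫ θ in (0:ℝ)..ε, (4 + (Real.exp (2*r) - 2) * (1 - Real.cos θ)) ^ (-lam) := by
  apply integral_congr
  intro x _
  show (Real.exp (2*r) + 2 + Real.cos x * (2 - Real.exp (2*r))) ^ (-lam)
      = (4 + (Real.exp (2*r) - 2) * (1 - Real.cos x)) ^ (-lam)
  congr 1
  ring

lemma lower1 (hlam : 1/2 ≤ lam) (hε0 : 0 < ε) (hεπ : ε < π/2)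
    (hr1 : 1 ≤ r) (hE16 : 16/ε^2 ≤ Real.exp (2*r)) :
    (5:ℝ) ^ (-lam) * Real.exp (-r)
      ≤ ∫ θ in (0:ℝ)..ε, (Real.exp (2*r) + 2 + Real.cos θ * (2 - Real.exp (2*r))) ^ (-lam) := by
  rw [integral_swap]
  have hE4 : 4 ≤ Real.exp (2*r) := setupE hr1
  set E := Real.exp (2*r) with hE
  set A := E - 2 with hA
  have hA0 : 0 < A := by simp only [hA]; linarith
  have hεsq : 0 < ε^2 := by positivity
  set δ := (A/2) ^ (-(1/2):ℝ) with hδdef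
  have hδ0 : 0 < δ := Real.rpow_pos_of_pos (by linarith) _
  have hδε : δ ≤ ε := by
    have h1 : (ε^2)⁻¹ ≤ A/2 := by
      rw [inv_eq_one_div]
      rw [div_le_iff₀ hεsq] at hE16 ⊢
      nlinarith
    calc δ ≤ ((ε^2)⁻¹) ^ (-(1/2):ℝ) :=
          Real.rpow_le_rpow_of_nonpos (by positivity) h1 (by norm_num)
      _ = ε := rpow_inv_sq_neg_half hε0
  have h5 : A * δ ^ 2 ≤ 2 := by
    rw [hδdef, rpow_neg_half_sq (by positivity : (0:ℝ) ≤ A/2)]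
    have h : A * (A/2)⁻¹ = 2 := by field_simp
    linarith [h.le]
  have hlow := lower_split lam ε A δ (by linarith) hδ0.le hδε hA0.le h5
  have hδexp : Real.exp (-r) ≤ δ := by
    calc Real.exp (-r) = E ^ (-(1/2):ℝ) := (exp_rpow_neg_half r).symm
      _ ≤ δ := Real.rpow_le_rpow_of_nonpos (by linarith) (by simp only [hA]; linarith)
          (by norm_num)
  calc (5:ℝ)^(-lam) * Real.exp (-r) ≤ (5:ℝ)^(-lam) * δ :=
        mul_le_mul_of_nonneg_left hδexp (Real.rpow_nonneg (by norm_num) _)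
    _ ≤ _ := hlow

lemma upper1 (hlam : 1/2 < lam) (hε0 : 0 < ε) (hεπ : ε < π/2)
    (hr1 : 1 ≤ r) (hE16 : 16/ε^2 ≤ Real.exp (2*r)) :
    (∫ θ in (0:ℝ)..ε, (Real.exp (2*r) + 2 + Real.cos θ * (2 - Real.exp (2*r))) ^ (-lam))
      ≤ (2 + 2 * (2/π^2) ^ (-lam) / (2*lam - 1)) * Real.exp (-r) := by
  have hπ := Real.pi_pos
  rw [integral_swap]
  have hE4 : 4 ≤ Real.exp (2*r) := setupE hr1
  set E := Real.exp (2*r) with hE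
  set A := E - 2 with hA
  have hA0 : 0 < A := by simp only [hA]; linarith
  have hεsq : 0 < ε^2 := by positivity
  set δ := A ^ (-(1/2):ℝ) with hδdef
  have hδ0 : 0 < δ := Real.rpow_pos_of_pos hA0 _
  have hδε : δ ≤ ε := by
    have h1 : (ε^2)⁻¹ ≤ A := by
      rw [inv_eq_one_div]
      rw [div_le_iff₀ hεsq] at hE16 ⊢
      nlinarith
    calc δ ≤ ((ε^2)⁻¹) ^ (-(1/2):ℝ) :=
          Real.rpow_le_rpow_of_nonpos (by positivity) h1 (by norm_num)
      _ = ε := rpow_inv_sq_neg_half hε0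
  have hup := upper_split lam ε A δ (by linarith) hεπ.le hδ0 hδε hA0
  have heval := eval_upper_gt lam (2*A/π^2) δ ε hlam (by positivity) hδ0 hδε
  have hcomb : (2*A/π^2) ^ (-lam) * δ ^ (1 - 2*lam) / (2*lam - 1)
      = (2/π^2) ^ (-lam) * δ / (2*lam - 1) := by
    rw [hδdef, show 2*A/π^2 = (2/π^2) * A by ring,
      Real.mul_rpow (by positivity) hA0.le, ← Real.rpow_mul hA0.le, mul_assoc,
      ← Real.rpow_add hA0, show -lam + -(1/2) * (1 - 2*lam) = -(1/2) by ring]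
  rw [hcomb] at heval
  have hδ2r : δ ≤ 2 * Real.exp (-r) := by
    have h1 : E/4 ≤ A := by simp only [hA]; linarith
    calc δ ≤ (E/4) ^ (-(1/2):ℝ) :=
          Real.rpow_le_rpow_of_nonpos (by linarith) h1 (by norm_num)
      _ = 2 * Real.exp (-r) := by
          rw [show (E/4 : ℝ) = E / 2^2 by norm_num]
          exact exp_div_rpow r 2 two_pos
  have hq0 : (0:ℝ) ≤ (2/π^2) ^ (-lam) / (2*lam - 1) :=
    div_nonneg (Real.rpow_nonneg (by positivity) _) (by linarith)
  have hfin : δ + (2/π^2) ^ (-lam) * δ / (2*lam - 1)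
      ≤ (2 + 2 * (2/π^2) ^ (-lam) / (2*lam - 1)) * Real.exp (-r) := by
    have h1 : δ * (1 + (2/π^2) ^ (-lam) / (2*lam - 1))
        ≤ (2 * Real.exp (-r)) * (1 + (2/π^2) ^ (-lam) / (2*lam - 1)) :=
      mul_le_mul_of_nonneg_right hδ2r (by linarith)
    have e1 : δ * (1 + (2/π^2) ^ (-lam) / (2*lam - 1))
        = δ + (2/π^2) ^ (-lam) * δ / (2*lam - 1) := by ring
    have e2 : (2 * Real.exp (-r)) * (1 + (2/π^2) ^ (-lam) / (2*lam - 1))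
        = (2 + 2 * (2/π^2) ^ (-lam) / (2*lam - 1)) * Real.exp (-r) := by ring
    linarith [h1, e1.symm.le, e2.le]
  linarith


lemma lower2 (hε0 : 0 < ε) (hεπ : ε < π/2) (hr1 : 1 ≤ r)
    (hE16 : 16/ε^2 ≤ Real.exp (2*r)) (hrε : 8 - 2*Real.log ε ≤ r) :
    (1/2) * (r * Real.exp (-r))
      ≤ ∫ θ in (0:ℝ)..ε,
          (Real.exp (2*r) + 2 + Real.cos θ * (2 - Real.exp (2*r))) ^ (-(1/2:ℝ)) := by
  rw [show ∫ θ in (0:ℝ)..ε,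
        (Real.exp (2*r) + 2 + Real.cos θ * (2 - Real.exp (2*r))) ^ (-(1/2:ℝ))
      = ∫ θ in (0:ℝ)..ε,
        (4 + (Real.exp (2*r) - 2) * (1 - Real.cos θ)) ^ (-(1/2:ℝ)) from integral_swap _ ε r]
  have hE4 : 4 ≤ Real.exp (2*r) := setupE hr1
  set E := Real.exp (2*r) with hE
  set A := E - 2 with hA
  have hA0 : 0 < A := by simp only [hA]; linarith
  have hεsq : 0 < ε^2 := by positivity
  set δ := (A/8) ^ (-(1/2):ℝ) with hδdef
  have hA8 : 0 < A/8 := by linarith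
  have hδ0 : 0 < δ := Real.rpow_pos_of_pos hA8 _
  have hδε : δ ≤ ε := by
    have h1 : (ε^2)⁻¹ ≤ A/8 := by
      rw [inv_eq_one_div]
      rw [div_le_iff₀ hεsq] at hE16 ⊢
      nlinarith
    calc δ ≤ ((ε^2)⁻¹) ^ (-(1/2):ℝ) :=
          Real.rpow_le_rpow_of_nonpos (by positivity) h1 (by norm_num)
      _ = ε := rpow_inv_sq_neg_half hε0
  have h8 : 8 ≤ A * δ ^ 2 := by
    rw [hδdef, rpow_neg_half_sq hA8.le]
    have h : A * (A/8)⁻¹ = 8 := by field_simp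
    linarith [h.ge]
  have hlow := lower_split_log ε A δ hδ0 hδε hA0 h8
  have hlogδ : Real.log δ = -(1/2) * (Real.log A - Real.log 8) := by
    rw [hδdef, Real.log_rpow hA8, Real.log_div hA0.ne' (by norm_num)]
  have hlogA : 2*r - 1 ≤ Real.log A := by
    have h1 : Real.log (E/2) ≤ Real.log A :=
      Real.log_le_log (by linarith) (by simp only [hA]; linarith)
    have h2 : Real.log (E/2) = 2*r - Real.log 2 := by
      rw [Real.log_div (by positivity) (by norm_num), hE, Real.log_exp]
    have h3 : Real.log 2 ≤ 1 := by linarith [Real.log_le_sub_one_of_pos (by norm_num : (0:ℝ) < 2)]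
    linarith
  have hlog8 : Real.log 8 ≤ 7 := by
    linarith [Real.log_le_sub_one_of_pos (by norm_num : (0:ℝ) < 8)]
  have hbr : r/2 ≤ Real.log ε - Real.log δ := by
    rw [hlogδ]
    linarith
  have hAexp : Real.exp (-r) ≤ A ^ (-(1/2):ℝ) := by
    calc Real.exp (-r) = E ^ (-(1/2):ℝ) := (exp_rpow_neg_half r).symm
      _ ≤ A ^ (-(1/2):ℝ) := Real.rpow_le_rpow_of_nonpos hA0
          (by simp only [hA]; linarith) (by norm_num)
  have hmul : Real.exp (-r) * (r/2) ≤ A ^ (-(1/2):ℝ) * (Real.log ε - Real.log δ) :=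
    mul_le_mul hAexp hbr (by linarith) (Real.rpow_nonneg hA0.le _)
  have he : (1/2) * (r * Real.exp (-r)) = Real.exp (-r) * (r/2) := by ring
  linarith

lemma upper2 (hε0 : 0 < ε) (hεπ : ε < π/2) (hr1 : 1 ≤ r)
    (hE16 : 16/ε^2 ≤ Real.exp (2*r)) :
    (∫ θ in (0:ℝ)..ε,
        (Real.exp (2*r) + 2 + Real.cos θ * (2 - Real.exp (2*r))) ^ (-(1/2:ℝ)))
      ≤ 14 * (r * Real.exp (-r)) := by
  have hπ := Real.pi_pos
  have hπ4 := Real.pi_le_four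
  rw [show ∫ θ in (0:ℝ)..ε,
        (Real.exp (2*r) + 2 + Real.cos θ * (2 - Real.exp (2*r))) ^ (-(1/2:ℝ))
      = ∫ θ in (0:ℝ)..ε,
        (4 + (Real.exp (2*r) - 2) * (1 - Real.cos θ)) ^ (-(1/2:ℝ)) from integral_swap _ ε r]
  have hE4 : 4 ≤ Real.exp (2*r) := setupE hr1
  set E := Real.exp (2*r) with hE
  set A := E - 2 with hA
  have hA0 : 0 < A := by simp only [hA]; linarith
  have hεsq : 0 < ε^2 := by positivity
  set δ := A ^ (-(1/2):ℝ) with hδdef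
  have hδ0 : 0 < δ := Real.rpow_pos_of_pos hA0 _
  have hδε : δ ≤ ε := by
    have h1 : (ε^2)⁻¹ ≤ A := by
      rw [inv_eq_one_div]
      rw [div_le_iff₀ hεsq] at hE16 ⊢
      nlinarith
    calc δ ≤ ((ε^2)⁻¹) ^ (-(1/2):ℝ) :=
          Real.rpow_le_rpow_of_nonpos (by positivity) h1 (by norm_num)
      _ = ε := rpow_inv_sq_neg_half hε0
  have hup := upper_split (1/2) ε A δ (by norm_num) hεπ.le hδ0 hδε hA0
  have heval := eval_upper_eq (2*A/π^2) δ ε (by positivity) hδ0 hδε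
  have hδ2r : δ ≤ 2 * Real.exp (-r) := by
    have h1 : E/4 ≤ A := by simp only [hA]; linarith
    calc δ ≤ (E/4) ^ (-(1/2):ℝ) :=
          Real.rpow_le_rpow_of_nonpos (by linarith) h1 (by norm_num)
      _ = 2 * Real.exp (-r) := by
          rw [show (E/4 : ℝ) = E / 2^2 by norm_num]
          exact exp_div_rpow r 2 two_pos
  have hB16 : E/16 ≤ 2*A/π^2 := by
    have h1 : E/2 ≤ A := by simp only [hA]; linarith
    have h2 : π^2 ≤ 16 := by nlinarith
    rw [div_le_div_iff₀ (by norm_num) (by positivity)]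
    nlinarith
  have hBexp : (2*A/π^2) ^ (-(1/2):ℝ) ≤ 4 * Real.exp (-r) := by
    calc (2*A/π^2) ^ (-(1/2):ℝ) ≤ (E/16) ^ (-(1/2):ℝ) :=
          Real.rpow_le_rpow_of_nonpos (by positivity) hB16 (by norm_num)
      _ = 4 * Real.exp (-r) := by
          rw [show (E/16 : ℝ) = E / 4^2 by norm_num]
          exact exp_div_rpow r 4 (by norm_num)
  have hlogδ : Real.log δ = -(1/2) * Real.log A := by
    rw [hδdef, Real.log_rpow hA0]
  have hlogA : Real.log A ≤ 2*r := by
    have h1 : Real.log A ≤ Real.log E := Real.log_le_log hA0 (by simp only [hA]; linarith)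
    rw [hE, Real.log_exp] at h1
    exact h1
  have hlogε : Real.log ε ≤ 1 := by
    linarith [Real.log_le_sub_one_of_pos hε0]
  have hbr1 : Real.log ε - Real.log δ ≤ 2*r := by
    rw [hlogδ]
    linarith
  have hbr0 : 0 ≤ Real.log ε - Real.log δ := by
    have := Real.log_le_log hδ0 hδε
    linarith
  have hmul : (2*A/π^2) ^ (-(1/2):ℝ) * (Real.log ε - Real.log δ)
      ≤ (4 * Real.exp (-r)) * (2*r) :=
    mul_le_mul hBexp hbr1 hbr0 (by positivity)
  have hfin : δ + (4 * Real.exp (-r)) * (2*r) ≤ 14 * (r * Real.exp (-r)) := by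
    have h1 : Real.exp (-r) ≤ r * Real.exp (-r) := by
      nlinarith [Real.exp_pos (-r)]
    nlinarith [Real.exp_pos (-r)]
  linarith [hup, heval.le, hmul]


end PerR


end LPIA

theorem line_process_integral_asymptotics (lam : ℝ) (hlam : 1 / 2 ≤ lam)
    (ε : ℝ) (hε : ε ∈ Set.Ioo 0 (π / 2)) :
    (1 / 2 < lam →
      ∃ c c' : ℝ, 0 < c ∧ c ≤ c' ∧ ∃ r₀ : ℝ, 0 < r₀ ∧ ∀ r ≥ r₀,
        c * Real.exp (-(2 * lam + 1) * r) ≤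
            Real.exp (-2 * lam * r) *
              (∫ θ in (0:ℝ)..ε,
                (Real.exp (2 * r) + 2 + Real.cos θ * (2 - Real.exp (2 * r))) ^ (-lam)) ∧
          Real.exp (-2 * lam * r) *
              (∫ θ in (0:ℝ)..ε,
                (Real.exp (2 * r) + 2 + Real.cos θ * (2 - Real.exp (2 * r))) ^ (-lam)) ≤
            c' * Real.exp (-(2 * lam + 1) * r)) ∧
    (lam = 1 / 2 →
      ∃ c c' : ℝ, 0 < c ∧ c ≤ c' ∧ ∃ r₀ : ℝ, 0 < r₀ ∧ ∀ r ≥ r₀,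
        c * (r * Real.exp (-2 * r)) ≤
            Real.exp (-2 * lam * r) *
              (∫ θ in (0:ℝ)..ε,
                (Real.exp (2 * r) + 2 + Real.cos θ * (2 - Real.exp (2 * r))) ^ (-lam)) ∧
          Real.exp (-2 * lam * r) *
              (∫ θ in (0:ℝ)..ε,
                (Real.exp (2 * r) + 2 + Real.cos θ * (2 - Real.exp (2 * r))) ^ (-lam)) ≤
            c' * (r * Real.exp (-2 * r))) := by
  obtain ⟨hε0, hεπ⟩ := hε
  have hr₀pos : (0:ℝ) < max (max 1 (Real.log (16/ε^2))) (8 - 2*Real.log ε) :=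
    lt_of_lt_of_le one_pos (le_max_of_le_left (le_max_left _ _))
  constructor
  · intro hlt
    refine ⟨(5:ℝ) ^ (-lam), 2 + 2 * (2/π^2) ^ (-lam) / (2*lam - 1),
      Real.rpow_pos_of_pos (by norm_num) _, ?_,
      max (max 1 (Real.log (16/ε^2))) (8 - 2*Real.log ε), hr₀pos, ?_⟩
    · have h1 : (5:ℝ) ^ (-lam) ≤ 1 :=
        Real.rpow_le_one_of_one_le_of_nonpos (by norm_num) (by linarith)
      have h2 : (0:ℝ) ≤ 2 * (2/π^2) ^ (-lam) / (2*lam - 1) := by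
        apply div_nonneg _ (by linarith)
        have := Real.rpow_nonneg (show (0:ℝ) ≤ 2/π^2 by positivity) (-lam)
        linarith
      linarith
    · intro r hr
      have hr1 : 1 ≤ r := le_trans (le_max_of_le_left (le_max_left _ _)) hr
      have hrlog : Real.log (16/ε^2) ≤ r :=
        le_trans (le_max_of_le_left (le_max_right _ _)) hr
      have hE16 : 16/ε^2 ≤ Real.exp (2*r) := by
        calc 16/ε^2 = Real.exp (Real.log (16/ε^2)) := (Real.exp_log (by positivity)).symm
          _ ≤ Real.exp r := Real.exp_le_exp.2 hrlog
          _ ≤ Real.exp (2*r) := Real.exp_le_exp.2 (by linarith)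
      have hL := LPIA.lower1 (le_of_lt hlt) hε0 hεπ hr1 hE16
      have hU := LPIA.upper1 hlt hε0 hεπ hr1 hE16
      have hkey : Real.exp (-2*lam*r) * Real.exp (-r) = Real.exp (-(2*lam+1)*r) := by
        rw [← Real.exp_add]; congr 1; ring
      have hexp0 : (0:ℝ) ≤ Real.exp (-2*lam*r) := (Real.exp_pos _).le
      set I := ∫ θ in (0:ℝ)..ε,
        (Real.exp (2*r) + 2 + Real.cos θ * (2 - Real.exp (2*r))) ^ (-lam) with hI
      constructor
      · calc (5:ℝ) ^ (-lam) * Real.exp (-(2*lam+1)*r)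
            = Real.exp (-2*lam*r) * ((5:ℝ) ^ (-lam) * Real.exp (-r)) := by
              rw [← hkey]; ring
          _ ≤ Real.exp (-2*lam*r) * I := mul_le_mul_of_nonneg_left hL hexp0
      · calc Real.exp (-2*lam*r) * I
            ≤ Real.exp (-2*lam*r) * ((2 + 2 * (2/π^2) ^ (-lam) / (2*lam - 1)) *
              Real.exp (-r)) := mul_le_mul_of_nonneg_left hU hexp0
          _ = (2 + 2 * (2/π^2) ^ (-lam) / (2*lam - 1)) * Real.exp (-(2*lam+1)*r) := by
              rw [← hkey]; ring
  · intro hhalf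
    subst hhalf
    refine ⟨1/2, 14, by norm_num, by norm_num,
      max (max 1 (Real.log (16/ε^2))) (8 - 2*Real.log ε), hr₀pos, ?_⟩
    intro r hr
    have hr1 : 1 ≤ r := le_trans (le_max_of_le_left (le_max_left _ _)) hr
    have hrlog : Real.log (16/ε^2) ≤ r :=
      le_trans (le_max_of_le_left (le_max_right _ _)) hr
    have hrε : 8 - 2*Real.log ε ≤ r := le_trans (le_max_right _ _) hr
    have hE16 : 16/ε^2 ≤ Real.exp (2*r) := by
      calc 16/ε^2 = Real.exp (Real.log (16/ε^2)) := (Real.exp_log (by positivity)).symm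
        _ ≤ Real.exp r := Real.exp_le_exp.2 hrlog
        _ ≤ Real.exp (2*r) := Real.exp_le_exp.2 (by linarith)
    have hL := LPIA.lower2 hε0 hεπ hr1 hE16 hrε
    have hU := LPIA.upper2 hε0 hεπ hr1 hE16
    have hkey : Real.exp (-2*(1/2:ℝ)*r) = Real.exp (-r) := by norm_num
    have hee : Real.exp (-r) * Real.exp (-r) = Real.exp (-2*r) := by
      rw [← Real.exp_add]; congr 1; ring
    have hexp0 : (0:ℝ) ≤ Real.exp (-r) := (Real.exp_pos _).le
    set I := ∫ θ in (0:ℝ)..ε,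
      (Real.exp (2*r) + 2 + Real.cos θ * (2 - Real.exp (2*r))) ^ (-(1/2:ℝ)) with hI
    rw [hkey]
    constructor
    · calc (1/2:ℝ) * (r * Real.exp (-2*r))
          = Real.exp (-r) * ((1/2) * (r * Real.exp (-r))) := by rw [← hee]; ring
        _ ≤ Real.exp (-r) * I := mul_le_mul_of_nonneg_left hL hexp0
    · calc Real.exp (-r) * I
          ≤ Real.exp (-r) * (14 * (r * Real.exp (-r))) := mul_le_mul_of_nonneg_left hU hexp0
        _ = 14 * (r * Real.exp (-2*r)) := by rw [← hee]; ring
end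

section
/- In the Poincaré disc model, a hyperbolic ball B_H(x, R) centered at a point x with Euclidean norm ρ = ‖x‖ intersects the hyperbolic ball B_H(0, r) = B_{R^2}(0, tanh(r/2)) if and only if ρ ≤ α(r̄), where r̄ = tanh(r/2), R̄ = tanh(R/2), and α(r̄) = ( sqrt((1 − R̄^2)^2 + 4(R̄ + r̄)(R̄ + R̄^2 r̄)) − (1 − R̄^2) ) / ( 2R̄(1 + R̄ r̄) ). -/
open Real

/-- Inverse hyperbolic cosine. -/
noncomputable def arcosh (x : ℝ) : ℝ := Real.log (x + Real.sqrt (x ^ 2 - 1))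

/-- Hyperbolic distance in the Poincaré disc model. -/
noncomputable def ddisc (z w : ℂ) : ℝ :=
  _root_.arcosh (1 + 2 * ‖z - w‖ ^ 2 / ((1 - ‖z‖ ^ 2) * (1 - ‖w‖ ^ 2)))

lemma tanh_pos_lt_one {t : ℝ} (ht : 0 < t) : 0 < Real.tanh t ∧ Real.tanh t < 1 := by
  have hc := Real.cosh_pos t
  have hs : 0 < Real.sinh t := Real.sinh_pos_iff.2 ht
  have hlt : Real.sinh t < Real.cosh t := by
    nlinarith [Real.cosh_sq_sub_sinh_sq t]
  rw [Real.tanh_eq_sinh_div_cosh]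
  constructor
  · positivity
  · rw [div_lt_one hc]; exact hlt

/-- `cosh R` in terms of `tanh (R/2)`. -/
lemma cosh_eq_tanh_half (R : ℝ) :
    Real.cosh R * (1 - Real.tanh (R / 2) ^ 2) = 1 + Real.tanh (R / 2) ^ 2 := by
  have h1 : Real.cosh R = Real.cosh (R / 2) ^ 2 + Real.sinh (R / 2) ^ 2 := by
    rw [← Real.cosh_two_mul]; congr 1; ring
  have h2 := Real.tanh_eq_sinh_div_cosh (R / 2)
  have h3 := Real.cosh_sq_sub_sinh_sq (R / 2)
  have hc := Real.cosh_pos (R / 2)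
  rw [h1, h2]
  field_simp
  linarith

lemma arcosh_le_iff {u R : ℝ} (hu : 1 ≤ u) (hR : 0 ≤ R) :
    _root_.arcosh u ≤ R ↔ u ≤ Real.cosh R := by
  have hsinh : 0 ≤ Real.sinh R := Real.sinh_nonneg_iff.2 hR
  have hch : Real.cosh R ^ 2 - 1 = Real.sinh R ^ 2 := by
    nlinarith [Real.cosh_sq_sub_sinh_sq R]
  have hsq : Real.sqrt (Real.cosh R ^ 2 - 1) = Real.sinh R := by
    rw [hch, Real.sqrt_sq hsinh]
  have hvpos : (0:ℝ) < u + Real.sqrt (u ^ 2 - 1) := by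
    have := Real.sqrt_nonneg (u ^ 2 - 1); linarith
  constructor
  · intro h
    by_contra hlt
    push_neg at hlt
    have hcosh1 := Real.one_le_cosh R
    have hs1 : Real.sqrt (Real.cosh R ^ 2 - 1) ≤ Real.sqrt (u ^ 2 - 1) := by
      apply Real.sqrt_le_sqrt; nlinarith
    have hgt : Real.exp R < u + Real.sqrt (u ^ 2 - 1) := by
      rw [← Real.cosh_add_sinh, ← hsq]; linarith
    have : u + Real.sqrt (u ^ 2 - 1) ≤ Real.exp R := by
      have := Real.exp_le_exp.2 h
      rwa [_root_.arcosh, Real.exp_log hvpos] at this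
    linarith
  · intro h
    have hcosh1 := Real.one_le_cosh R
    have hs1 : Real.sqrt (u ^ 2 - 1) ≤ Real.sinh R := by
      rw [← hsq]; apply Real.sqrt_le_sqrt; nlinarith
    have hv : u + Real.sqrt (u ^ 2 - 1) ≤ Real.exp R := by
      rw [← Real.cosh_add_sinh]; linarith
    calc _root_.arcosh u ≤ Real.log (Real.exp R) := Real.log_le_log hvpos hv
      _ = R := Real.log_exp R

set_option maxHeartbeats 2000000 in
theorem ball_intersects_ball_iff (R r : ℝ) (hR : 0 < R) (hr : 0 < r)
    (x : ℂ) (hx : ‖x‖ < 1)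
    (Rb rb : ℝ) (hRb : Rb = Real.tanh (R / 2)) (hrb : rb = Real.tanh (r / 2)) :
    ({z : ℂ | ‖z‖ < 1 ∧ ddisc z x ≤ R} ∩
        {z : ℂ | ‖z‖ ≤ rb}).Nonempty ↔
      ‖x‖ ≤
        (Real.sqrt ((1 - Rb ^ 2) ^ 2 + 4 * (Rb + rb) * (Rb + Rb ^ 2 * rb)) - (1 - Rb ^ 2)) /
          (2 * Rb * (1 + Rb * rb)) := by
  set ρ := ‖x‖ with hρdef
  have hρ0 : 0 ≤ ρ := norm_nonneg x
  obtain ⟨hRb0, hRb1⟩ : 0 < Rb ∧ Rb < 1 := hRb ▸ tanh_pos_lt_one (by linarith)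
  obtain ⟨hrb0, hrb1⟩ : 0 < rb ∧ rb < 1 := hrb ▸ tanh_pos_lt_one (by linarith)
  have hcosh : Real.cosh R * (1 - Rb ^ 2) = 1 + Rb ^ 2 := hRb ▸ cosh_eq_tanh_half R
  have hRbsq : (0:ℝ) < 1 - Rb ^ 2 := by nlinarith
  -- simplify the right-hand side
  have hsqrt : Real.sqrt ((1 - Rb ^ 2) ^ 2 + 4 * (Rb + rb) * (Rb + Rb ^ 2 * rb))
      = (1 - Rb ^ 2) + 2 * Rb * (Rb + rb) := by
    rw [show (1 - Rb ^ 2) ^ 2 + 4 * (Rb + rb) * (Rb + Rb ^ 2 * rb)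
        = ((1 - Rb ^ 2) + 2 * Rb * (Rb + rb)) ^ 2 by ring]
    exact Real.sqrt_sq (by nlinarith)
  have hden : (0:ℝ) < 1 + Rb * rb := by nlinarith
  have hRHS : (Real.sqrt ((1 - Rb ^ 2) ^ 2 + 4 * (Rb + rb) * (Rb + Rb ^ 2 * rb)) - (1 - Rb ^ 2)) /
      (2 * Rb * (1 + Rb * rb)) = (Rb + rb) / (1 + Rb * rb) := by
    rw [hsqrt, div_eq_div_iff (by positivity) hden.ne']
    ring
  rw [hRHS]
  have hρ1 : ρ < 1 := hx
  have hρsq : (0:ℝ) < 1 - ρ ^ 2 := by nlinarith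
  constructor
  · -- forward direction
    rintro ⟨z, ⟨hz1, hz2⟩, hz3⟩
    simp only [Set.mem_setOf_eq] at hz3
    set s := ‖z‖ with hsdef
    have hs0 : 0 ≤ s := norm_nonneg z
    have hs1 : s < 1 := hz1
    have hssq : (0:ℝ) < 1 - s ^ 2 := by nlinarith
    set d := ‖z - x‖ with hddef
    have hd0 : 0 ≤ d := norm_nonneg _
    have hu1 : (1:ℝ) ≤ 1 + 2 * d ^ 2 / ((1 - s ^ 2) * (1 - ρ ^ 2)) := by
      have : (0:ℝ) ≤ 2 * d ^ 2 / ((1 - s ^ 2) * (1 - ρ ^ 2)) := by positivity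
      linarith
    have hle : 1 + 2 * d ^ 2 / ((1 - s ^ 2) * (1 - ρ ^ 2)) ≤ Real.cosh R :=
      (arcosh_le_iff hu1 hR.le).1 hz2
    have h3 : 2 * d ^ 2 ≤ (Real.cosh R - 1) * ((1 - s ^ 2) * (1 - ρ ^ 2)) := by
      have h2 : 2 * d ^ 2 / ((1 - s ^ 2) * (1 - ρ ^ 2)) ≤ Real.cosh R - 1 := by linarith
      rwa [div_le_iff₀ (by positivity)] at h2
    have hkey : d ^ 2 * (1 - Rb ^ 2) ≤ Rb ^ 2 * ((1 - s ^ 2) * (1 - ρ ^ 2)) := by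
      have h4 := mul_le_mul_of_nonneg_right h3 hRbsq.le
      have h5 : (Real.cosh R - 1) * ((1 - s ^ 2) * (1 - ρ ^ 2)) * (1 - Rb ^ 2)
          = 2 * Rb ^ 2 * ((1 - s ^ 2) * (1 - ρ ^ 2)) := by
        linear_combination ((1 - s ^ 2) * (1 - ρ ^ 2)) * hcosh
      nlinarith [h4, h5]
    clear hle hu1 hz2
    have htri : ρ - s ≤ d := by
      have h := norm_sub_norm_le x z
      have hcomm : ‖x - z‖ = d := by rw [hddef, norm_sub_rev]
      linarith [hcomm.le, hcomm.ge, h]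
    rw [le_div_iff₀ hden]
    by_cases hcase : ρ ≤ s
    · -- ρ ≤ s ≤ rb, and rb ≤ t
      have hA : ρ * (1 + Rb * rb) ≤ rb * (1 + Rb * rb) :=
        mul_le_mul_of_nonneg_right (hcase.trans hz3) hden.le
      have hB : rb * (1 + Rb * rb) ≤ Rb + rb := by
        nlinarith [mul_nonneg hRb0.le (by nlinarith : (0:ℝ) ≤ 1 - rb ^ 2)]
      linarith
    · push_neg at hcase
      have hρs1 : 0 < 1 - ρ * s := by
        have hms : ρ * s ≤ ρ := mul_le_of_le_one_right hρ0 hs1.le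
        linarith
      have hds : (ρ - s) ^ 2 ≤ d ^ 2 := by
        nlinarith [mul_self_le_mul_self (by linarith : (0:ℝ) ≤ ρ - s) htri]
      have hds2 := mul_le_mul_of_nonneg_right hds hRbsq.le
      have hq : (ρ - s) ^ 2 ≤ Rb ^ 2 * (1 - ρ * s) ^ 2 := by nlinarith [hds2, hkey]
      have hab : 0 < (ρ - s) + Rb * (1 - ρ * s) := by
        linarith [mul_pos hRb0 hρs1]
      have hlin : ρ - s ≤ Rb * (1 - ρ * s) := by nlinarith [hq, hab]
      have h6 : ρ * (1 + Rb * s) ≤ Rb + s := by nlinarith [hlin]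
      have h7 : (0:ℝ) < 1 + Rb * s := by positivity
      have h8 : (Rb + s) * (1 + Rb * rb) ≤ (Rb + rb) * (1 + Rb * s) := by
        nlinarith [mul_nonneg (by linarith : (0:ℝ) ≤ rb - s) hRbsq.le]
      have h9 := mul_le_mul_of_nonneg_right h6 hden.le
      have h10 : (ρ * (1 + Rb * rb)) * (1 + Rb * s) ≤ (Rb + rb) * (1 + Rb * s) :=
        calc (ρ * (1 + Rb * rb)) * (1 + Rb * s) = (ρ * (1 + Rb * s)) * (1 + Rb * rb) := by ring
          _ ≤ (Rb + s) * (1 + Rb * rb) := h9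
          _ ≤ (Rb + rb) * (1 + Rb * s) := h8
      exact le_of_mul_le_mul_right h10 h7
  · -- backward direction
    intro hρt
    rw [le_div_iff₀ hden] at hρt
    by_cases hcase : ρ ≤ rb
    · refine ⟨x, ⟨hx, ?_⟩, hcase⟩
      show ddisc x x ≤ R
      simp [ddisc, _root_.arcosh]
      linarith
    · push_neg at hcase
      have hρpos : 0 < ρ := lt_trans hrb0 hcase
      have habs : ‖((rb / ρ : ℝ) : ℂ) * x‖ = rb := by
        rw [norm_mul, Complex.norm_real, Real.norm_eq_abs, abs_of_pos (by positivity), ← hρdef,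
          div_mul_cancel₀ _ hρpos.ne']
      refine ⟨((rb / ρ : ℝ) : ℂ) * x, ⟨?_, ?_⟩, ?_⟩
      · show ‖_‖ < 1
        rw [habs]; exact hrb1
      · show ddisc _ x ≤ R
        have hsub : ‖((rb / ρ : ℝ) : ℂ) * x - x‖ = ρ - rb := by
          have he : ((rb / ρ : ℝ) : ℂ) * x - x = ((rb / ρ - 1 : ℝ) : ℂ) * x := by
            push_cast; ring
          rw [he, norm_mul, Complex.norm_real, Real.norm_eq_abs,
            abs_of_neg (by rw [sub_neg, div_lt_one hρpos]; exact hcase), ← hρdef]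
          field_simp
          ring
        unfold ddisc
        rw [habs, hsub]
        have hrbsq : (0:ℝ) < 1 - rb ^ 2 := by nlinarith
        have hu1 : (1:ℝ) ≤ 1 + 2 * (ρ - rb) ^ 2 / ((1 - rb ^ 2) * (1 - ρ ^ 2)) := by
          have : (0:ℝ) ≤ 2 * (ρ - rb) ^ 2 / ((1 - rb ^ 2) * (1 - ρ ^ 2)) := by positivity
          linarith
        rw [arcosh_le_iff hu1 hR.le]
        have hρs1 : 0 < 1 - ρ * rb := by nlinarith
        have hlin : ρ - rb ≤ Rb * (1 - ρ * rb) := by nlinarith [hρt]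
        have hkey : (ρ - rb) ^ 2 * (1 - Rb ^ 2) ≤ Rb ^ 2 * ((1 - rb ^ 2) * (1 - ρ ^ 2)) := by
          nlinarith [mul_nonneg (by linarith : (0:ℝ) ≤ Rb * (1 - ρ * rb) - (ρ - rb))
            (by nlinarith [mul_pos hRb0 hρs1] : (0:ℝ) ≤ Rb * (1 - ρ * rb) + (ρ - rb))]
        have h5 : 2 * (ρ - rb) ^ 2 * (1 - Rb ^ 2)
            ≤ (Real.cosh R - 1) * ((1 - rb ^ 2) * (1 - ρ ^ 2)) * (1 - Rb ^ 2) := by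
          calc 2 * (ρ - rb) ^ 2 * (1 - Rb ^ 2)
              ≤ 2 * (Rb ^ 2 * ((1 - rb ^ 2) * (1 - ρ ^ 2))) := by linarith [hkey]
            _ = (Real.cosh R - 1) * ((1 - rb ^ 2) * (1 - ρ ^ 2)) * (1 - Rb ^ 2) := by
                linear_combination (-(1 - rb ^ 2) * (1 - ρ ^ 2)) * hcosh
        have h6 : 2 * (ρ - rb) ^ 2 ≤ (Real.cosh R - 1) * ((1 - rb ^ 2) * (1 - ρ ^ 2)) := by
          nlinarith [h5, hRbsq]
        have h7 : 2 * (ρ - rb) ^ 2 / ((1 - rb ^ 2) * (1 - ρ ^ 2)) ≤ Real.cosh R - 1 := by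
          rw [div_le_iff₀ (by positivity)]; linarith
        linarith
      · show ‖_‖ ≤ rb
        rw [habs]
end
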